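/- arXiv:0911.2667 — 5 statements merged into one kernel-verified Lean document; each statement's English description precedes it below -/
import Mathlib

section
/- For every natural number r ≥ 1, the number of words (j_1, j_2, …, j_r) of length r over the alphabet {1,2,3} satisfying the least upward jumps rule equals (1 + 3^{r-1})/2; moreover, for r ≥ 3 this number also equals 2 + 3 + 3^2 + … + 3^{r-2}. -/
/-!
Exchanging the letters 2 and 3 is an involution of the `3 ^ (r - 1)` words over `{1, 2, 3}` that
start with 1. Such a word obeys the least upward jumps rule exactly when its first letter `≥ 2`
(if any) is a 2, so of every pair `{w, swap w}` exactly one obeys the rule, except for the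
constant word `1 ⋯ 1`, which is fixed and obeys it. Hence twice the count is `3 ^ (r - 1) + 1`.
-/

/-- The set of words `(j_1, …, j_r)` of length `r` over the alphabet `{1, …, K}`
satisfying the least upward jumps rule: `j_1 = 1` and, for every `l` with
`1 ≤ l ≤ r-1`, if `j_{l+1} > max(j_1,…,j_l)` then `j_{l+1} = 1 + max(j_1,…,j_l)`. -/
def lujWords (K r : ℕ) : Set (Fin r → ℕ) :=
  {j | (∀ i, 1 ≤ j i ∧ j i ≤ K) ∧ (∀ i : Fin r, (i : ℕ) = 0 → j i = 1) ∧
    ∀ l l' : Fin r, (l' : ℕ) = (l : ℕ) + 1 →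
      ((Finset.Iic l).sup j < j l' → j l' = (Finset.Iic l).sup j + 1)}

open Finset Function

lemma two_mul_ncard_of_union_inter_image {α : Type*} {A W : Set α} {f : α → α} {c : α}
    (hA : A.Finite) (hf : Injective f) (hunion : W ∪ f '' W = A) (hinter : W ∩ f '' W = {c}) :
    2 * W.ncard = A.ncard + 1 := by
  have hW : W.Finite := hA.subset (hunion ▸ Set.subset_union_left)
  have := Set.ncard_union_add_ncard_inter W (f '' W) hW (hW.image f)
  rw [hunion, hinter, Set.ncard_singleton, Set.ncard_image_of_injective W hf] at this
  omega

lemma two_mul_sum_Icc_pow_three (n : ℕ) : 2 * ∑ i ∈ Icc 1 n, 3 ^ i = 3 ^ (n + 1) - 3 := by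
  induction n with
  | zero => simp
  | succ n ih =>
    rw [sum_Icc_succ_top (by omega), mul_add, ih, pow_succ 3 (n + 1)]
    have : 3 ≤ 3 ^ (n + 1) := Nat.le_self_pow (by omega) 3
    omega

lemma two_le_swap_two_three_iff {x : ℕ} : 2 ≤ Equiv.swap 2 3 x ↔ 2 ≤ x := by
  rcases eq_or_ne x 2 with rfl | h2
  · simp
  rcases eq_or_ne x 3 with rfl | h3
  · simp
  rw [Equiv.swap_apply_of_ne_of_ne h2 h3]

def ThreesPreceded {ι : Type*} [LT ι] (j : ι → ℕ) : Prop :=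
  ∀ p, j p = 3 → ∃ q < p, 2 ≤ j q

section ThreesPreceded

variable {ι : Type*} [LinearOrder ι] {j : ι → ℕ}

lemma threesPreceded_iff_ne_three {p₀ : ι} (h₀ : 2 ≤ j p₀) (hmin : ∀ q < p₀, j q < 2) :
    ThreesPreceded j ↔ j p₀ ≠ 3 := by
  refine ⟨fun h h3 => ?_, fun h p hp => ⟨p₀, ?_, h₀⟩⟩
  · obtain ⟨q, hq, hq2⟩ := h p₀ h3
    exact (hmin q hq).not_ge hq2
  · rcases lt_trichotomy p₀ p with hlt | rfl | hgt
    · exact hlt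
    · exact absurd hp h
    · have := hmin p hgt; omega

lemma threesPreceded_of_lt_two (h : ∀ p, j p < 2) : ThreesPreceded j :=
  fun p hp => absurd (h p) (by omega)

lemma threesPreceded_swap_iff_ne_two {p₀ : ι} (h₀ : 2 ≤ j p₀) (hmin : ∀ q < p₀, j q < 2) :
    ThreesPreceded (Equiv.swap 2 3 ∘ j) ↔ j p₀ ≠ 2 := by
  have hmin' : ∀ q < p₀, (Equiv.swap 2 3 ∘ j) q < 2 :=
    fun q hq => not_le.1 fun h2 => (hmin q hq).not_ge (two_le_swap_two_three_iff.1 h2)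
  rw [threesPreceded_iff_ne_three (j := Equiv.swap 2 3 ∘ j) (two_le_swap_two_three_iff.2 h₀) hmin',
    comp_apply, Ne, Equiv.swap_apply_eq_iff, Equiv.swap_apply_right]

variable [WellFoundedLT ι]

lemma exists_first_two_le (h : ∃ p, 2 ≤ j p) : ∃ p₀, 2 ≤ j p₀ ∧ ∀ q < p₀, j q < 2 := by
  obtain ⟨p₀, h₀, hmin⟩ := wellFounded_lt.has_min {p | 2 ≤ j p} h
  exact ⟨p₀, h₀, fun q hq => not_le.1 fun h2 => hmin q h2 hq⟩

lemma threesPreceded_or_swap : ThreesPreceded j ∨ ThreesPreceded (Equiv.swap 2 3 ∘ j) := by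
  by_cases h : ∃ p, 2 ≤ j p
  · obtain ⟨p₀, h₀, hmin⟩ := exists_first_two_le h
    rw [threesPreceded_iff_ne_three h₀ hmin, threesPreceded_swap_iff_ne_two h₀ hmin]
    omega
  · push Not at h
    exact .inl (threesPreceded_of_lt_two h)

lemma lt_two_of_threesPreceded_of_swap (hj : ∀ i, j i ≤ 3) (h : ThreesPreceded j)
    (h' : ThreesPreceded (Equiv.swap 2 3 ∘ j)) (i : ι) : j i < 2 := by
  by_contra! hi
  obtain ⟨p₀, h₀, hmin⟩ := exists_first_two_le ⟨i, hi⟩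
  rw [threesPreceded_iff_ne_three h₀ hmin] at h
  rw [threesPreceded_swap_iff_ne_two h₀ hmin] at h'
  have := hj p₀
  omega

end ThreesPreceded

def startOneWords (r : ℕ) : Finset (Fin r → ℕ) :=
  Fintype.piFinset fun i => if (i : ℕ) = 0 then {1} else Icc 1 3

lemma mem_startOneWords {r : ℕ} {j : Fin r → ℕ} :
    j ∈ startOneWords r ↔ (∀ i, 1 ≤ j i ∧ j i ≤ 3) ∧ ∀ i : Fin r, (i : ℕ) = 0 → j i = 1 := by
  simp only [startOneWords, Fintype.mem_piFinset]
  refine ⟨fun h => ⟨fun i => ?_, fun i hi => ?_⟩, fun ⟨h13, h0⟩ i => ?_⟩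
  · have := h i
    split_ifs at this <;> simp_all
  · simpa [hi] using h i
  · split_ifs with hi
    · simp [h0 i hi]
    · simpa using h13 i

lemma card_startOneWords (r : ℕ) : #(startOneWords r) = 3 ^ (r - 1) := by
  cases r with
  | zero => rfl
  | succ n => simp [startOneWords, Fin.prod_univ_succ]

lemma swap_two_three_comp_mem_startOneWords {r : ℕ} {j : Fin r → ℕ}
    (hj : j ∈ startOneWords r) : Equiv.swap 2 3 ∘ j ∈ startOneWords r := by
  rw [mem_startOneWords] at hj ⊢
  refine ⟨fun i => ?_, fun i hi => by simp [hj.2 i hi, Equiv.swap_apply_of_ne_of_ne]⟩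
  have := hj.1 i
  simp only [comp_apply]
  rcases (by omega : j i = 1 ∨ j i = 2 ∨ j i = 3) with h | h | h <;>
    simp [h, Equiv.swap_apply_of_ne_of_ne]

lemma two_le_sup_Iic_iff {r : ℕ} {j : Fin r → ℕ} {l l' : Fin r} (hl : (l' : ℕ) = l + 1) :
    2 ≤ (Iic l).sup j ↔ ∃ q < l', 2 ≤ j q := by
  simp only [Finset.le_sup_iff (show (0 : ℕ) < 2 by omega), mem_Iic, Fin.le_def, Fin.lt_def, hl,
    Nat.lt_succ_iff]

lemma mem_lujWords_three_iff {r : ℕ} {j : Fin r → ℕ} :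
    j ∈ lujWords 3 r ↔ j ∈ startOneWords r ∧ ThreesPreceded j := by
  rw [mem_startOneWords, lujWords, Set.mem_ofPred_eq, and_assoc]
  refine and_congr_right fun h13 => and_congr_right fun h0 =>
    ⟨fun h p hp => ?_, fun h l l' hl hlt => ?_⟩
  · have hp0 : (p : ℕ) ≠ 0 := fun hp0 => by simp [h0 p hp0] at hp
    let l : Fin r := ⟨p - 1, by omega⟩
    have hl : (p : ℕ) = l + 1 := by simp only [l]; omega
    have := h l p hl
    refine (two_le_sup_Iic_iff hl).1 ?_
    omega
  · have hsup : 1 ≤ (Iic l).sup j := (h13 l).1.trans (le_sup (mem_Iic.2 le_rfl))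
    have := h13 l'
    rcases (by omega : j l' ≤ 2 ∨ j l' = 3) with h2 | h3
    · omega
    · have := (two_le_sup_Iic_iff hl).2 (h l' h3)
      omega

lemma swap_two_three_comp_involutive {ι : Type*} :
    Involutive (Equiv.swap 2 3 ∘ · : (ι → ℕ) → (ι → ℕ)) :=
  fun j => funext fun i => Equiv.swap_apply_self 2 3 (j i)

lemma lujWords_three_union_image_swap (r : ℕ) :
    lujWords 3 r ∪ (Equiv.swap 2 3 ∘ ·) '' lujWords 3 r = startOneWords r := by
  ext j
  rw [swap_two_three_comp_involutive.image_eq_preimage_symm, Set.mem_union, Set.mem_preimage,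
    mem_lujWords_three_iff, mem_lujWords_three_iff, mem_coe]
  refine ⟨fun h => ?_, fun hj => (threesPreceded_or_swap (j := j)).imp (⟨hj, ·⟩)
    (⟨swap_two_three_comp_mem_startOneWords hj, ·⟩)⟩
  rcases h with ⟨hj, -⟩ | ⟨hj, -⟩
  · exact hj
  · simpa [swap_two_three_comp_involutive j] using swap_two_three_comp_mem_startOneWords hj

lemma lujWords_three_inter_image_swap (r : ℕ) :
    lujWords 3 r ∩ (Equiv.swap 2 3 ∘ ·) '' lujWords 3 r = {fun _ => 1} := by
  ext j
  rw [swap_two_three_comp_involutive.image_eq_preimage_symm, Set.mem_inter_iff, Set.mem_preimage,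
    mem_lujWords_three_iff, mem_lujWords_three_iff, Set.mem_singleton_iff]
  constructor
  · rintro ⟨⟨hj, h⟩, -, h'⟩
    have h13 := (mem_startOneWords.1 hj).1
    funext i
    have := lt_two_of_threesPreceded_of_swap (fun i => (h13 i).2) h h' i
    have := h13 i
    omega
  · rintro rfl
    have hone : (fun _ => 1) ∈ startOneWords r ∧ ThreesPreceded (fun _ : Fin r => 1) :=
      ⟨mem_startOneWords.2 ⟨fun _ => by omega, fun _ _ => rfl⟩,
        threesPreceded_of_lt_two fun _ => by omega⟩
    have hswap : Equiv.swap 2 3 ∘ (fun _ : Fin r => 1) = fun _ => 1 :=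
      funext fun _ => show Equiv.swap 2 3 1 = 1 from
        Equiv.swap_apply_of_ne_of_ne (by decide) (by decide)
    exact ⟨hone, hswap ▸ hone⟩

lemma two_mul_ncard_lujWords_three (r : ℕ) : 2 * (lujWords 3 r).ncard = 3 ^ (r - 1) + 1 := by
  rw [two_mul_ncard_of_union_inter_image (startOneWords r).finite_toSet
    swap_two_three_comp_involutive.injective (lujWords_three_union_image_swap r)
    (lujWords_three_inter_image_swap r), Set.ncard_coe_finset, card_startOneWords]

theorem card_lujWords_width_two_general (r : ℕ) :
    (lujWords 3 r).ncard = (1 + 3 ^ (r - 1)) / 2 ∧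
    (3 ≤ r → (lujWords 3 r).ncard = 2 + ∑ i ∈ Finset.Icc 1 (r - 2), 3 ^ i) := by
  have hcard := two_mul_ncard_lujWords_three r
  refine ⟨by omega, fun hr => ?_⟩
  have hsum := two_mul_sum_Icc_pow_three (r - 2)
  have : 3 ≤ 3 ^ (r - 1) := Nat.le_self_pow (by omega) 3
  rw [show r - 2 + 1 = r - 1 by omega] at hsum
  omega

/-- For every `r ≥ 1`, the number of words of length `r` over `{1,2,3}` satisfying
the least upward jumps rule equals `(1 + 3^{r-1})/2`; moreover, for `r ≥ 3` this
number also equals `2 + 3 + 3² + … + 3^{r-2}`. -/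
theorem card_lujWords_width_two (r : ℕ) (hr : 1 ≤ r) :
    (lujWords 3 r).ncard = (1 + 3 ^ (r - 1)) / 2 ∧
    (3 ≤ r → (lujWords 3 r).ncard = 2 + ∑ i ∈ Finset.Icc 1 (r - 2), 3 ^ i) :=
  card_lujWords_width_two_general r
end

section
/- Let m, n be natural numbers with 2 ≤ m ≤ n, and let V = ℝ^{1+m+n} with coordinates (x_0, x_1, …, x_m, y_1, …, y_n) and corresponding coordinate linear functionals x_0^*, …, x_m^*, y_1^*, …, y_n^* and coordinate basis vectors e_{x_0}, …, e_{x_m}, e_{y_1}, …, e_{y_n}. Fix real numbers y_1, …, y_m and let D ⊆ V be the linear span of the vector u_0 = e_{x_0} + y_1 e_{x_1} + … + y_m e_{x_m} together with e_{y_1}, …, e_{y_n}. Then for a linear functional α : V → ℝ the following are equivalent: (i) for every i ∈ {1, …, m} and all u, v, w ∈ D, the determinant of the 3×3 matrix whose rows are (α(u), α(v), α(w)), (x_0^*(u), x_0^*(v), x_0^*(w)), and (y_i^*(u), y_i^*(v), y_i^*(w)) vanishes; (ii) α lies in the linear span of x_0^*, x_1^*, …, x_m^*. -/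
/-- Index of the coordinate `x_0` in `ℝ^{1+m+n}`. -/
def ix0 (m n : ℕ) : Fin (1 + m + n) := ⟨0, by omega⟩

/-- Index of the coordinate `x_i` (`1 ≤ i ≤ m`) in `ℝ^{1+m+n}`. -/
def ixX (m n : ℕ) (i : Fin m) : Fin (1 + m + n) := ⟨1 + i, by have := i.isLt; omega⟩

/-- Index of the coordinate `y_j` (`1 ≤ j ≤ n`) in `ℝ^{1+m+n}`. -/
def ixY (m n : ℕ) (j : Fin n) : Fin (1 + m + n) := ⟨1 + m + j, by have := j.isLt; omega⟩

/-- The vector `u_0 = e_{x_0} + y_1 e_{x_1} + … + y_m e_{x_m}`. -/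
def u0 (m n : ℕ) (yc : Fin m → ℝ) : Fin (1 + m + n) → ℝ :=
  Pi.single (ix0 m n) 1 + ∑ i : Fin m, yc i • (Pi.single (ixX m n i) (1 : ℝ) : Fin (1 + m + n) → ℝ)

/-- The subspace `D ⊆ ℝ^{1+m+n}` spanned by `u_0` and `e_{y_1}, …, e_{y_n}`. -/
def Dsub (m n : ℕ) (yc : Fin m → ℝ) : Submodule ℝ (Fin (1 + m + n) → ℝ) :=
  Submodule.span ℝ
    ({u0 m n yc} ∪ Set.range fun j : Fin n => Pi.single (ixY m n j) (1 : ℝ))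

/-! A functional lies in the span of `x_0^*, …, x_m^*` exactly when it kills every
`e_{y_j}`. Such a functional agrees with `α(u_0) x_0^*` on `D`, so the first two rows of each
determinant are proportional. Conversely, evaluating the determinant at `u_0, e_{y_j}, e_{y_k}`
with `k ≠ j` (possible since `m ≥ 2`) gives `-α(e_{y_j})`. -/

theorem LinearMap.mem_span_image_proj_iff {R ι : Type*} [CommSemiring R] [Fintype ι]
    [DecidableEq ι] (s : Set ι) (α : (ι → R) →ₗ[R] R) :
    α ∈ Submodule.span R ((fun i => (LinearMap.proj i : (ι → R) →ₗ[R] R)) '' s) ↔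
      ∀ j ∉ s, α (Pi.single j 1) = 0 := by
  constructor
  · intro hα j hj
    induction hα using Submodule.span_induction with
    | mem β hβ =>
      obtain ⟨i, hi, rfl⟩ := hβ
      simp [show i ≠ j from fun h => hj (h ▸ hi)]
    | zero => rfl
    | add β γ _ _ hβ hγ => simp [hβ, hγ]
    | smul c β _ hβ => simp [hβ]
  · intro h
    rw [← (Pi.basisFun R ι).sum_dual_apply_smul_coord α]
    refine Submodule.sum_mem _ fun k _ => ?_
    by_cases hk : k ∈ s
    · refine Submodule.smul_mem _ _ (Submodule.subset_span ⟨k, hk, ?_⟩)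
      ext
      simp
    · simp [h k hk]

section Coordinates

variable {m n : ℕ}

lemma ix0_ne_ixX (i : Fin m) : ix0 m n ≠ ixX m n i := by
  simp [ix0, ixX, Fin.ext_iff]
  omega

lemma ix0_ne_ixY (j : Fin n) : ix0 m n ≠ ixY m n j := by
  simp [ix0, ixY, Fin.ext_iff]
  omega

lemma ixX_ne_ixY (i : Fin m) (j : Fin n) : ixX m n i ≠ ixY m n j := by
  simp [ixX, ixY, Fin.ext_iff]
  omega

lemma ixY_injective : Function.Injective (ixY m n) := fun j j' h => by
  simpa [ixY, Fin.ext_iff] using h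

lemma eq_ix0_or_ixX_or_ixY (k : Fin (1 + m + n)) :
    k = ix0 m n ∨ (∃ i, k = ixX m n i) ∨ ∃ j, k = ixY m n j := by
  obtain ⟨k, hk⟩ := k
  by_cases h0 : k = 0
  · exact .inl (Fin.ext h0)
  by_cases hm : k < 1 + m
  · exact .inr (.inl ⟨⟨k - 1, by omega⟩, Fin.ext (by simp [ixX]; omega)⟩)
  · exact .inr (.inr ⟨⟨k - (1 + m), by omega⟩, Fin.ext (by simp [ixY]; omega)⟩)

lemma u0_apply_ix0 (yc : Fin m → ℝ) : u0 m n yc (ix0 m n) = 1 := by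
  simp [u0, ix0_ne_ixX]

lemma u0_apply_ixY (yc : Fin m → ℝ) (j : Fin n) : u0 m n yc (ixY m n j) = 0 := by
  simp [u0, (ix0_ne_ixY j).symm, (ixX_ne_ixY _ j).symm]

lemma exists_castLE_ne (hm : 2 ≤ m) (hmn : m ≤ n) (j : Fin n) :
    ∃ i : Fin m, Fin.castLE hmn i ≠ j := by
  by_cases hj : (j : ℕ) = 0
  · exact ⟨⟨1, by omega⟩, by simp [Fin.ext_iff, hj]⟩
  · exact ⟨⟨0, by omega⟩, by simp [Fin.ext_iff]; omega⟩

end Coordinates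

lemma mem_span_proj_ix0_ixX_iff {m n : ℕ} (α : (Fin (1 + m + n) → ℝ) →ₗ[ℝ] ℝ) :
    α ∈ Submodule.span ℝ
        ({(LinearMap.proj (ix0 m n) : (Fin (1 + m + n) → ℝ) →ₗ[ℝ] ℝ)} ∪
          Set.range fun i : Fin m =>
            (LinearMap.proj (ixX m n i) : (Fin (1 + m + n) → ℝ) →ₗ[ℝ] ℝ)) ↔
      ∀ j : Fin n, α (Pi.single (ixY m n j) 1) = 0 := by
  rw [show _ ∪ _ = (fun k => (LinearMap.proj k : (Fin (1 + m + n) → ℝ) →ₗ[ℝ] ℝ)) ''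
      ({ix0 m n} ∪ Set.range (ixX m n)) by
    rw [Set.image_union, Set.image_singleton, ← Set.range_comp]; rfl,
    LinearMap.mem_span_image_proj_iff]
  constructor
  · intro h j
    refine h _ ?_
    rintro (h0 | ⟨i, hi⟩)
    · exact ix0_ne_ixY j h0.symm
    · exact ixX_ne_ixY i j hi
  · intro h k hk
    rcases eq_ix0_or_ixX_or_ixY k with rfl | ⟨i, rfl⟩ | ⟨j, rfl⟩
    · exact absurd (.inl rfl) hk
    · exact absurd (.inr ⟨i, rfl⟩) hk
    · exact h j

lemma u0_mem_Dsub (m n : ℕ) (yc : Fin m → ℝ) : u0 m n yc ∈ Dsub m n yc :=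
  Submodule.subset_span (.inl rfl)

lemma single_ixY_mem_Dsub {m n : ℕ} (yc : Fin m → ℝ) (j : Fin n) :
    Pi.single (ixY m n j) 1 ∈ Dsub m n yc :=
  Submodule.subset_span (.inr ⟨j, rfl⟩)

lemma apply_eq_of_mem_Dsub {m n : ℕ} {yc : Fin m → ℝ} {α : (Fin (1 + m + n) → ℝ) →ₗ[ℝ] ℝ}
    (hα : ∀ j : Fin n, α (Pi.single (ixY m n j) 1) = 0) {u : Fin (1 + m + n) → ℝ}
    (hu : u ∈ Dsub m n yc) : α u = α (u0 m n yc) * u (ix0 m n) := by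
  refine LinearMap.eqOn_span (g := α (u0 m n yc) • LinearMap.proj (ix0 m n)) ?_ hu
  rintro _ (rfl | ⟨j, rfl⟩)
  · simp [u0_apply_ix0]
  · simp [hα j, ix0_ne_ixY j]

lemma det_u0_single_ixY {m n : ℕ} (yc : Fin m → ℝ) (α : (Fin (1 + m + n) → ℝ) →ₗ[ℝ] ℝ)
    {j k : Fin n} (hkj : k ≠ j) :
    let v := Pi.single (ixY m n j) (1 : ℝ)
    let w := Pi.single (ixY m n k) (1 : ℝ)
    Matrix.det !![α (u0 m n yc), α v, α w;
        u0 m n yc (ix0 m n), v (ix0 m n), w (ix0 m n);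
        u0 m n yc (ixY m n k), v (ixY m n k), w (ixY m n k)] = -α v := by
  simp [Matrix.det_fin_three, u0_apply_ix0, u0_apply_ixY, ix0_ne_ixY,
    ixY_injective.ne hkj]

/-- For a linear functional `α` on `ℝ^{1+m+n}`, the conditions
`(α ∧ dx_0 ∧ dy_i)|_D = 0` for `i = 1, …, m` hold iff `α` lies in the span of
`x_0^*, x_1^*, …, x_m^*`. -/
theorem covariant_subdistribution (m n : ℕ) (hm : 2 ≤ m) (hmn : m ≤ n)
    (yc : Fin m → ℝ) (α : (Fin (1 + m + n) → ℝ) →ₗ[ℝ] ℝ) :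
    (∀ i : Fin m, ∀ u v w : Fin (1 + m + n) → ℝ,
        u ∈ Dsub m n yc → v ∈ Dsub m n yc → w ∈ Dsub m n yc →
        Matrix.det !![α u, α v, α w;
            u (ix0 m n), v (ix0 m n), w (ix0 m n);
            u (ixY m n (Fin.castLE hmn i)), v (ixY m n (Fin.castLE hmn i)),
              w (ixY m n (Fin.castLE hmn i))] = 0)
      ↔ α ∈ Submodule.span ℝ
          ({(LinearMap.proj (ix0 m n) : (Fin (1 + m + n) → ℝ) →ₗ[ℝ] ℝ)} ∪
            Set.range fun i : Fin m =>
              (LinearMap.proj (ixX m n i) : (Fin (1 + m + n) → ℝ) →ₗ[ℝ] ℝ)) := by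
  rw [mem_span_proj_ix0_ixX_iff]
  constructor
  · intro h j
    obtain ⟨i, hi⟩ := exists_castLE_ne hm hmn j
    have hdet := h i _ _ _ (u0_mem_Dsub m n yc) (single_ixY_mem_Dsub yc j)
      (single_ixY_mem_Dsub yc (Fin.castLE hmn i))
    rwa [det_u0_single_ixY yc α hi, neg_eq_zero] at hdet
  · intro h i u v w hu hv hw
    rw [apply_eq_of_mem_Dsub h hu, apply_eq_of_mem_Dsub h hv, apply_eq_of_mem_Dsub h hw,
      Matrix.det_fin_three]
    simp only [Matrix.of_apply, Matrix.cons_val', Matrix.cons_val_zero, Matrix.cons_val_one,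
      Matrix.cons_val_two, Matrix.empty_val', Matrix.cons_val_fin_one, Matrix.head_cons,
      Matrix.tail_cons, Matrix.head_fin_const]
    ring
end

section
/- Let m, n be natural numbers with 2 ≤ m ≤ n. On ℝ^{1+m+n} with coordinates (x_0, x_1, …, x_m, y_1, …, y_n), let X_0 be the smooth vector field X_0(p) = e_{x_0} + y_1(p) e_{x_1} + … + y_m(p) e_{x_m}, and for each point p let D(p) ⊆ ℝ^{1+m+n} be the linear span of X_0(p), e_{y_1}, …, e_{y_n}. Then for every smooth vector field v : ℝ^{1+m+n} → ℝ^{1+m+n} with v(p) ∈ D(p) for all p, the following are equivalent: (i) for every smooth vector field w with w(q) ∈ D(q) for all q, the Lie bracket [v, w] satisfies [v, w](p) ∈ D(p) for all p; (ii) v(p) lies in the linear span of e_{y_{m+1}}, …, e_{y_n} for all p. -/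
/-- The Lie bracket of vector fields on `ℝ^N`:
`[v, w](p) = Dw(p)·v(p) − Dv(p)·w(p)`. -/
noncomputable def lieBracket {N : ℕ} (v w : (Fin N → ℝ) → Fin N → ℝ) : (Fin N → ℝ) → Fin N → ℝ :=
  fun p => fderiv ℝ w p (v p) - fderiv ℝ v p (w p)

/-- The vector field `X_0(p) = e_{x_0} + y_1(p) e_{x_1} + … + y_m(p) e_{x_m}`. -/
def X0 (m n : ℕ) (hmn : m ≤ n) : (Fin (1 + m + n) → ℝ) → Fin (1 + m + n) → ℝ :=
  fun p => Pi.single (ix0 m n) 1 +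
    ∑ i : Fin m, p (ixY m n (Fin.castLE hmn i)) •
      (Pi.single (ixX m n i) (1 : ℝ) : Fin (1 + m + n) → ℝ)

/-- `D(p)`: the span of `X_0(p)` and `e_{y_1}, …, e_{y_n}`. -/
def Ddist (m n : ℕ) (hmn : m ≤ n) (p : Fin (1 + m + n) → ℝ) :
    Submodule ℝ (Fin (1 + m + n) → ℝ) :=
  Submodule.span ℝ
    ({X0 m n hmn p} ∪ Set.range fun j : Fin n => Pi.single (ixY m n j) (1 : ℝ))

section Aux
variable {m n : ℕ}

lemma ixX_inj {i i' : Fin m} (h : ixX m n i = ixX m n i') : i = i' := by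
  simp only [ixX, Fin.mk.injEq] at h
  exact Fin.ext (by omega)

lemma ixY_inj {j j' : Fin n} (h : ixY m n j = ixY m n j') : j = j' := by
  simp only [ixY, Fin.mk.injEq] at h
  exact Fin.ext (by omega)

lemma index_cases (k : Fin (1 + m + n)) :
    k = ix0 m n ∨ (∃ i : Fin m, k = ixX m n i) ∨ ∃ j : Fin n, k = ixY m n j := by
  have hk := k.isLt
  rcases Nat.lt_or_ge k.val 1 with h | h
  · exact Or.inl (Fin.ext (by simp only [ix0]; omega))
  rcases Nat.lt_or_ge k.val (1 + m) with h2 | h2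
  · exact Or.inr (Or.inl ⟨⟨k.val - 1, by omega⟩, Fin.ext (by simp only [ixX]; omega)⟩)
  · exact Or.inr (Or.inr ⟨⟨k.val - 1 - m, by omega⟩, Fin.ext (by simp only [ixY]; omega)⟩)

lemma X0_apply (hmn : m ≤ n) (p : Fin (1 + m + n) → ℝ) (k : Fin (1 + m + n)) :
    X0 m n hmn p k = (Pi.single (ix0 m n) (1:ℝ) : Fin (1+m+n) → ℝ) k
      + ∑ i : Fin m, p (ixY m n (Fin.castLE hmn i)) * (Pi.single (ixX m n i) (1:ℝ) : Fin (1+m+n) → ℝ) k := by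
  simp [X0, Finset.sum_apply]

lemma X0_apply_ix0 (hmn : m ≤ n) (p : Fin (1 + m + n) → ℝ) :
    X0 m n hmn p (ix0 m n) = 1 := by
  rw [X0_apply]
  rw [Pi.single_eq_same, Finset.sum_eq_zero, add_zero]
  intro i _
  rw [Pi.single_eq_of_ne (ix0_ne_ixX i), mul_zero]

lemma X0_apply_ixX (hmn : m ≤ n) (p : Fin (1 + m + n) → ℝ) (i : Fin m) :
    X0 m n hmn p (ixX m n i) = p (ixY m n (Fin.castLE hmn i)) := by
  rw [X0_apply, Pi.single_eq_of_ne (Ne.symm (ix0_ne_ixX i)), zero_add]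
  rw [Finset.sum_eq_single i]
  · rw [Pi.single_eq_same, mul_one]
  · intro b _ hb
    have hne : ixX m n i ≠ ixX m n b := fun h => hb (ixX_inj h).symm
    rw [Pi.single_eq_of_ne hne, mul_zero]
  · intro h; exact absurd (Finset.mem_univ i) h

lemma X0_apply_ixY (hmn : m ≤ n) (p : Fin (1 + m + n) → ℝ) (j : Fin n) :
    X0 m n hmn p (ixY m n j) = 0 := by
  rw [X0_apply, Pi.single_eq_of_ne (Ne.symm (ix0_ne_ixY j)), zero_add]
  apply Finset.sum_eq_zero
  intro i _
  rw [Pi.single_eq_of_ne (Ne.symm (ixX_ne_ixY i j)), mul_zero]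

lemma mem_Ddist_iff (hmn : m ≤ n) (p u : Fin (1 + m + n) → ℝ) :
    u ∈ Ddist m n hmn p ↔
      ∀ i : Fin m, u (ixX m n i) = u (ix0 m n) * p (ixY m n (Fin.castLE hmn i)) := by
  constructor
  · intro hu i
    set L : (Fin (1 + m + n) → ℝ) →ₗ[ℝ] ℝ :=
      LinearMap.proj (ixX m n i)
        - p (ixY m n (Fin.castLE hmn i)) • LinearMap.proj (ix0 m n) with hL
    have hker : Ddist m n hmn p ≤ LinearMap.ker L := by
      rw [Ddist, Submodule.span_le]
      rintro x (rfl | ⟨j, rfl⟩)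
      · simp only [SetLike.mem_coe, LinearMap.mem_ker, hL, LinearMap.sub_apply,
          LinearMap.smul_apply, LinearMap.proj_apply, smul_eq_mul]
        rw [X0_apply_ixX, X0_apply_ix0, mul_one, sub_self]
      · simp only [SetLike.mem_coe, LinearMap.mem_ker, hL, LinearMap.sub_apply,
          LinearMap.smul_apply, LinearMap.proj_apply, smul_eq_mul]
        rw [Pi.single_eq_of_ne (ixX_ne_ixY i j),
          Pi.single_eq_of_ne (ix0_ne_ixY j), mul_zero, sub_self]
    have := hker hu
    simp only [LinearMap.mem_ker, hL, LinearMap.sub_apply, LinearMap.smul_apply,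
      LinearMap.proj_apply, smul_eq_mul, sub_eq_zero] at this
    rw [this, mul_comm]
  · intro h
    have hu : u = u (ix0 m n) • X0 m n hmn p
        + ∑ j : Fin n, u (ixY m n j) • (Pi.single (ixY m n j) (1:ℝ) : Fin (1+m+n) → ℝ) := by
      funext k
      simp only [Pi.add_apply, Pi.smul_apply, smul_eq_mul, Finset.sum_apply]
      rcases index_cases k with rfl | ⟨i, rfl⟩ | ⟨j, rfl⟩
      · rw [X0_apply_ix0, mul_one, Finset.sum_eq_zero, add_zero]
        intro j _; rw [Pi.single_eq_of_ne (ix0_ne_ixY j), mul_zero]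
      · rw [X0_apply_ixX, Finset.sum_eq_zero, add_zero, h i]
        intro j _; rw [Pi.single_eq_of_ne (ixX_ne_ixY i j), mul_zero]
      · rw [X0_apply_ixY, mul_zero, zero_add, Finset.sum_eq_single j]
        · rw [Pi.single_eq_same, mul_one]
        · intro b _ hb
          have hne : ixY m n j ≠ ixY m n b := fun hh => hb (ixY_inj hh).symm
          rw [Pi.single_eq_of_ne hne, mul_zero]
        · intro hj; exact absurd (Finset.mem_univ j) hj
    rw [hu]
    refine Submodule.add_mem _
      (Submodule.smul_mem _ _ (Submodule.subset_span (Or.inl rfl))) ?_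
    exact Submodule.sum_mem _ fun j _ =>
      Submodule.smul_mem _ _ (Submodule.subset_span (Or.inr ⟨j, rfl⟩))

lemma mem_spanY_iff (u : Fin (1 + m + n) → ℝ) :
    u ∈ Submodule.span ℝ
        {x : Fin (1 + m + n) → ℝ |
          ∃ j : Fin n, m ≤ (j : ℕ) ∧ x = Pi.single (ixY m n j) (1 : ℝ)} ↔
      ∀ k : Fin (1 + m + n), (k : ℕ) < 1 + m + m → u k = 0 := by
  constructor
  · intro hu k hk
    have hker : Submodule.span ℝ
        {x : Fin (1 + m + n) → ℝ |
          ∃ j : Fin n, m ≤ (j : ℕ) ∧ x = Pi.single (ixY m n j) (1 : ℝ)}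
        ≤ LinearMap.ker (LinearMap.proj (R := ℝ) (φ := fun _ : Fin (1+m+n) => ℝ) k) := by
      rw [Submodule.span_le]
      rintro x ⟨j, hj, rfl⟩
      simp only [SetLike.mem_coe, LinearMap.mem_ker, LinearMap.proj_apply]
      apply Pi.single_eq_of_ne
      intro hh
      rw [hh] at hk
      simp only [ixY] at hk
      omega
    simpa using hker hu
  · intro h
    have hu : u = ∑ k : Fin (1 + m + n), u k • (Pi.single k (1:ℝ) : Fin (1+m+n) → ℝ) := by
      funext k'
      simp only [Finset.sum_apply, Pi.smul_apply, smul_eq_mul]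
      rw [Finset.sum_eq_single k']
      · rw [Pi.single_eq_same, mul_one]
      · intro b _ hb; rw [Pi.single_eq_of_ne (Ne.symm hb), mul_zero]
      · intro hk; exact absurd (Finset.mem_univ k') hk
    rw [hu]
    apply Submodule.sum_mem
    intro k _
    by_cases hk : (k : ℕ) < 1 + m + m
    · rw [h k hk, zero_smul]; exact Submodule.zero_mem _
    · apply Submodule.smul_mem
      apply Submodule.subset_span
      have hkk := k.isLt
      have hk2 : k = ixY m n ⟨k.val - 1 - m, by omega⟩ := by
        apply Fin.ext
        simp only [ixY]
        omega
      exact ⟨⟨k.val - 1 - m, by omega⟩, by show m ≤ k.val - 1 - m; omega,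
        congrArg (fun a : Fin (1+m+n) => (Pi.single a (1:ℝ) : Fin (1+m+n) → ℝ)) hk2⟩

set_option maxHeartbeats 1000000 in
lemma fderiv_component {N M : ℕ} {f : (Fin N → ℝ) → Fin M → ℝ} {p : Fin N → ℝ}
    (hf : DifferentiableAt ℝ f p) (u : Fin N → ℝ) (k : Fin M) :
    fderiv ℝ f p u k = fderiv ℝ (fun q => f q k) p u := by
  have h : ∀ k, DifferentiableAt ℝ (fun q => f q k) p := differentiableAt_pi.1 hf
  rw [show f = fun q k => f q k from rfl, fderiv_pi h]
  rfl

lemma fderiv_coord {N : ℕ} (p u : Fin N → ℝ) (a : Fin N) :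
    fderiv ℝ (fun q : Fin N → ℝ => q a) p u = u a := by
  rw [show (fun q : Fin N → ℝ => q a)
      = (ContinuousLinearMap.proj a : (Fin N → ℝ) →L[ℝ] ℝ) from rfl]
  rw [ContinuousLinearMap.fderiv]
  rfl

end Aux

/-- A smooth vector field `v` with values in `D` is Cauchy characteristic
(preserves `D` under Lie bracket with every smooth section of `D`) iff at every
point its value lies in the span of `e_{y_{m+1}}, …, e_{y_n}`. -/
theorem cauchy_characteristic_module (m n : ℕ) (hm : 2 ≤ m) (hmn : m ≤ n)
    (v : (Fin (1 + m + n) → ℝ) → Fin (1 + m + n) → ℝ)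
    (hv : ContDiff ℝ (⊤ : ℕ∞) v) (hvD : ∀ p, v p ∈ Ddist m n hmn p) :
    (∀ w : (Fin (1 + m + n) → ℝ) → Fin (1 + m + n) → ℝ,
        ContDiff ℝ (⊤ : ℕ∞) w → (∀ q, w q ∈ Ddist m n hmn q) →
        ∀ p, lieBracket v w p ∈ Ddist m n hmn p)
      ↔ ∀ p, v p ∈ Submodule.span ℝ
          {x : Fin (1 + m + n) → ℝ |
            ∃ j : Fin n, m ≤ (j : ℕ) ∧ x = Pi.single (ixY m n j) (1 : ℝ)} := by
  have hvdiff : Differentiable ℝ v := hv.differentiable (by simp)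
  have hvc : ∀ k p, DifferentiableAt ℝ (fun q => v q k) p := by
    intro k p
    exact differentiableAt_pi.1 (hvdiff p) k
  have hcoord : ∀ (a : Fin (1 + m + n)) (p : Fin (1 + m + n) → ℝ),
      DifferentiableAt ℝ (fun q : Fin (1 + m + n) → ℝ => q a) p := by
    intro a p
    exact (ContinuousLinearMap.proj (R := ℝ) (φ := fun _ : Fin (1 + m + n) => ℝ)
      a).differentiableAt
  constructor
  · intro H
    have hvX : ∀ p (i : Fin m),
        v p (ixX m n i) = v p (ix0 m n) * p (ixY m n (Fin.castLE hmn i)) :=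
      fun p i => (mem_Ddist_iff hmn p (v p)).1 (hvD p) i
    -- Step 1 : the coefficient of `X0` vanishes
    have ha0 : ∀ p, v p (ix0 m n) = 0 := by
      intro p
      set i0 : Fin m := ⟨0, by omega⟩ with hi0
      set j0 : Fin n := Fin.castLE hmn i0 with hj0
      set u0 : Fin (1 + m + n) → ℝ := Pi.single (ixY m n j0) 1 with hu0def
      have hmem := H (fun _ => u0) contDiff_const
        (fun q => Submodule.subset_span (Or.inr ⟨j0, rfl⟩)) p
      rw [mem_Ddist_iff] at hmem
      have hrel := hmem i0
      have hLB : ∀ k, lieBracket v (fun _ => u0) p k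
          = - fderiv ℝ (fun q => v q k) p u0 := by
        intro k
        simp only [lieBracket, fderiv_fun_const, Pi.zero_apply, Pi.sub_apply,
          ContinuousLinearMap.zero_apply]
        rw [fderiv_component (hvdiff p)]
        ring
      rw [hLB, hLB] at hrel
      -- identify the component functions
      have hfx : (fun q => v q (ixX m n i0))
          = fun q => v q (ix0 m n) * q (ixY m n j0) := funext fun q => hvX q i0
      rw [hfx, fderiv_fun_mul (hvc (ix0 m n) p) (hcoord (ixY m n j0) p)] at hrel
      simp only [ContinuousLinearMap.add_apply, ContinuousLinearMap.smul_apply,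
        smul_eq_mul] at hrel
      rw [fderiv_coord] at hrel
      rw [hu0def, Pi.single_eq_same] at hrel
      nlinarith [hrel]
    have hxX : ∀ q (i : Fin m), v q (ixX m n i) = 0 := by
      intro q i
      rw [hvX, ha0, zero_mul]
    -- Step 2 : bracket with X0 kills the first m y-components
    have hX0smooth : ContDiff ℝ (⊤ : ℕ∞) (X0 m n hmn) := by
      unfold X0
      refine ContDiff.add contDiff_const (ContDiff.sum fun i _ => ?_)
      exact ((ContinuousLinearMap.proj (R := ℝ) (φ := fun _ : Fin (1 + m + n) => ℝ)
        (ixY m n (Fin.castLE hmn i))).contDiff).smul contDiff_const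
    have hyY : ∀ p (i : Fin m), v p (ixY m n (Fin.castLE hmn i)) = 0 := by
      intro p i
      have hmem := H (X0 m n hmn) hX0smooth
        (fun q => Submodule.subset_span (Or.inl rfl)) p
      rw [mem_Ddist_iff] at hmem
      have hrel := hmem i
      have hX0diff : DifferentiableAt ℝ (X0 m n hmn) p :=
        (hX0smooth.differentiable (by simp)) p
      have hLB : ∀ k, lieBracket v (X0 m n hmn) p k
          = fderiv ℝ (fun q => X0 m n hmn q k) p (v p)
            - fderiv ℝ (fun q => v q k) p (X0 m n hmn p) := by
        intro k
        simp only [lieBracket, Pi.sub_apply]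
        rw [fderiv_component hX0diff, fderiv_component (hvdiff p)]
      rw [hLB, hLB] at hrel
      have e1 : (fun q => X0 m n hmn q (ixX m n i))
          = fun q : Fin (1 + m + n) → ℝ => q (ixY m n (Fin.castLE hmn i)) :=
        funext fun q => X0_apply_ixX hmn q i
      have e2 : (fun q => X0 m n hmn q (ix0 m n)) = fun _ => (1 : ℝ) :=
        funext fun q => X0_apply_ix0 hmn q
      have e3 : (fun q => v q (ixX m n i)) = fun _ => (0 : ℝ) :=
        funext fun q => hxX q i
      have e4 : (fun q => v q (ix0 m n)) = fun _ => (0 : ℝ) :=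
        funext fun q => ha0 q
      rw [e1, e2, e3, e4, fderiv_coord, fderiv_fun_const, fderiv_fun_const] at hrel
      simpa using hrel
    -- conclude
    intro p
    rw [mem_spanY_iff]
    intro k hk
    rcases index_cases k with rfl | ⟨i, rfl⟩ | ⟨j, rfl⟩
    · exact ha0 p
    · exact hxX p i
    · have hj : (j : ℕ) < m := by
        simp only [ixY] at hk
        omega
      have hjeq : Fin.castLE hmn ⟨(j : ℕ), hj⟩ = j := Fin.ext rfl
      rw [← hjeq]
      exact hyY p ⟨(j : ℕ), hj⟩
  · intro hY w hw hwD p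
    have hz : ∀ q (k : Fin (1 + m + n)), (k : ℕ) < 1 + m + m → v q k = 0 :=
      fun q => (mem_spanY_iff (v q)).1 (hY q)
    rw [mem_Ddist_iff]
    intro i
    have hwdiff : DifferentiableAt ℝ w p := (hw.differentiable (by simp)) p
    have hbdiff : DifferentiableAt ℝ (fun q => w q (ix0 m n)) p :=
      differentiableAt_pi.1 hwdiff (ix0 m n)
    have hLB : ∀ k, lieBracket v w p k
        = fderiv ℝ (fun q => w q k) p (v p)
          - fderiv ℝ (fun q => v q k) p (w p) := by
      intro k
      simp only [lieBracket, Pi.sub_apply]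
      rw [fderiv_component hwdiff, fderiv_component (hvdiff p)]
    have e3 : (fun q => v q (ixX m n i)) = fun _ => (0 : ℝ) := by
      funext q
      refine hz q _ ?_
      show 1 + (i : ℕ) < 1 + m + m
      have := i.isLt
      omega
    have e4 : (fun q => v q (ix0 m n)) = fun _ => (0 : ℝ) := by
      funext q
      exact hz q _ (by show 0 < 1 + m + m; omega)
    have hwX : (fun q => w q (ixX m n i))
        = fun q => w q (ix0 m n) * q (ixY m n (Fin.castLE hmn i)) :=
      funext fun q => (mem_Ddist_iff hmn q (w q)).1 (hwD q) i
    have hvy : v p (ixY m n (Fin.castLE hmn i)) = 0 := by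
      refine hz p _ ?_
      show 1 + m + ((Fin.castLE hmn i : Fin n) : ℕ) < 1 + m + m
      have := i.isLt
      simp only [Fin.coe_castLE]
      omega
    rw [hLB, hLB, e3, e4, fderiv_fun_const, hwX,
      fderiv_fun_mul hbdiff (hcoord (ixY m n (Fin.castLE hmn i)) p)]
    simp only [ContinuousLinearMap.add_apply, ContinuousLinearMap.smul_apply,
      smul_eq_mul, Pi.zero_apply, ContinuousLinearMap.zero_apply]
    rw [fderiv_coord, hvy]
    ring
end

section
/- On ℝ^7 with coordinates (t, x, y, x_1, y_1, x_2, y_2), consider the vector fields Z'_1 = x_2(∂_t + x_1∂_x + y_1∂_y) + ∂_{x_1} + y_2∂_{y_1}, Z'_2 = ∂_{x_2}, Z'_3 = ∂_{y_2}. At every point p ∈ ℝ^7: (a) the span of Z'_1(p), Z'_2(p), Z'_3(p) has dimension 3; (b) the span of these three vectors together with the values at p of the pairwise Lie brackets [Z'_i, Z'_j] (1 ≤ i < j ≤ 3) has dimension 5; (c) the span of the six vector fields in (b) together with the values at p of all pairwise Lie brackets among those six vector fields equals all of ℝ^7. -/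
/-- Coordinates on `ℝ^7`: `(t, x, y, x₁, y₁, x₂, y₂)` = indices `0, …, 6`.
`Z₁' = x₂(∂_t + x₁∂_x + y₁∂_y) + ∂_{x₁} + y₂∂_{y₁}`. -/
def Z1' : (Fin 7 → ℝ) → Fin 7 → ℝ := fun p =>
  p 5 • (Pi.single 0 (1 : ℝ) + p 3 • (Pi.single 1 (1 : ℝ) : Fin 7 → ℝ)
      + p 4 • (Pi.single 2 (1 : ℝ) : Fin 7 → ℝ))
    + Pi.single 3 1
    + p 6 • (Pi.single 4 (1 : ℝ) : Fin 7 → ℝ)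

/-- `Z₂' = ∂_{x₂}`. -/
def Z2' : (Fin 7 → ℝ) → Fin 7 → ℝ := fun _ => Pi.single 5 1

/-- `Z₃' = ∂_{y₂}`. -/
def Z3' : (Fin 7 → ℝ) → Fin 7 → ℝ := fun _ => Pi.single 6 1

/-- The six vector fields `Z₁', Z₂', Z₃', [Z₁',Z₂'], [Z₁',Z₃'], [Z₂',Z₃']`. -/
noncomputable def sixFields' : Fin 6 → (Fin 7 → ℝ) → Fin 7 → ℝ :=
  ![Z1', Z2', Z3', lieBracket Z1' Z2', lieBracket Z1' Z3', lieBracket Z2' Z3']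

/-!
Since `Z₂'`, `Z₃'` and `[Z₁', Z₃']` are constant fields, every bracket needed reduces to
directional derivatives of `Z₁'` and of `[Z₁', Z₂']`. One finds
`[Z₁', Z₂'] = -(∂_t + x₁∂_x + y₁∂_y)`, `[Z₁', Z₃'] = -∂_{y₁}`, `[Z₂', Z₃'] = 0`,
`[Z₁', [Z₁', Z₂']] = -(∂_x + y₂∂_y)` and `[[Z₁', Z₂'], [Z₁', Z₃']] = -∂_y`.
Up to reordering, the coefficient matrix of the four nonzero brackets together with
`Z₁', Z₂', Z₃'` is triangular with nonzero diagonal, so these seven fields form a frame of `ℝ⁷`;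
its first three and first five members span the first two steps of the flag.
-/

open ContinuousLinearMap

local notation "𝐞" i:max => (Pi.single i (1 : ℝ) : Fin 7 → ℝ)

section LieBracket

variable {N : ℕ}

theorem lieBracket_const_left (c : Fin N → ℝ) (w : (Fin N → ℝ) → Fin N → ℝ) (p : Fin N → ℝ) :
    lieBracket (fun _ => c) w p = fderiv ℝ w p c := by
  simp [lieBracket]

theorem lieBracket_const_right (v : (Fin N → ℝ) → Fin N → ℝ) (c : Fin N → ℝ) (p : Fin N → ℝ) :
    lieBracket v (fun _ => c) p = -fderiv ℝ v p c := by
  simp [lieBracket]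

end LieBracket

theorem fderiv_apply_coord {𝕜 ι : Type*} [NontriviallyNormedField 𝕜] [Fintype ι] (i : ι)
    (p w : ι → 𝕜) : fderiv 𝕜 (fun q : ι → 𝕜 => q i) p w = w i := by
  rw [(hasFDerivAt_apply i p).fderiv]
  rfl

theorem fderiv_Z1'_apply (p w : Fin 7 → ℝ) :
    fderiv ℝ Z1' p w = w 5 • (𝐞 0 + p 3 • 𝐞 1 + p 4 • 𝐞 2) + p 5 • (w 3 • 𝐞 1 + w 4 • 𝐞 2)
      + w 6 • 𝐞 4 := by
  unfold Z1'
  simp (disch := fun_prop) only [fderiv_fun_add, fderiv_fun_smul, fderiv_fun_const,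
    fderiv_apply_coord, add_apply, smul_apply, smulRight_apply, Pi.zero_apply, zero_apply]
  module

theorem lieBracket_Z1'_Z2' : lieBracket Z1' Z2' = fun p => -(𝐞 0 + p 3 • 𝐞 1 + p 4 • 𝐞 2) := by
  funext p
  unfold Z2'
  rw [lieBracket_const_right, fderiv_Z1'_apply]
  simp

theorem lieBracket_Z1'_Z3' : lieBracket Z1' Z3' = fun _ => -𝐞 4 := by
  funext p
  unfold Z3'
  rw [lieBracket_const_right, fderiv_Z1'_apply]
  simp

theorem lieBracket_Z2'_Z3' : lieBracket Z2' Z3' = 0 := by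
  funext p
  unfold Z2' Z3'
  rw [lieBracket_const_left]
  simp

theorem fderiv_lieBracket_Z1'_Z2'_apply (p w : Fin 7 → ℝ) :
    fderiv ℝ (lieBracket Z1' Z2') p w = -(w 3 • 𝐞 1 + w 4 • 𝐞 2) := by
  rw [lieBracket_Z1'_Z2']
  simp (disch := fun_prop) [fderiv_fun_add, fderiv_fun_smul, fderiv_apply_coord]

theorem lieBracket_Z1'_lieBracket_Z1'_Z2' (p : Fin 7 → ℝ) :
    lieBracket Z1' (lieBracket Z1' Z2') p = -(𝐞 1 + p 6 • 𝐞 2) := by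
  rw [lieBracket, fderiv_lieBracket_Z1'_Z2'_apply, fderiv_Z1'_apply, lieBracket_Z1'_Z2']
  simp [Z1']

theorem lieBracket_lieBracket_Z1'_Z2'_lieBracket_Z1'_Z3' (p : Fin 7 → ℝ) :
    lieBracket (lieBracket Z1' Z2') (lieBracket Z1' Z3') p = -𝐞 2 := by
  rw [lieBracket_Z1'_Z3', lieBracket_const_right, map_neg, fderiv_lieBracket_Z1'_Z2'_apply]
  simp

noncomputable def adaptedFrame (p : Fin 7 → ℝ) : Fin 7 → Fin 7 → ℝ :=
  ![Z1' p, Z2' p, Z3' p, lieBracket Z1' Z2' p, lieBracket Z1' Z3' p,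
    lieBracket Z1' (lieBracket Z1' Z2') p, lieBracket (lieBracket Z1' Z2') (lieBracket Z1' Z3') p]

theorem adaptedFrame_eq (p : Fin 7 → ℝ) : adaptedFrame p =
    ![Z1' p, 𝐞 5, 𝐞 6, -(𝐞 0 + p 3 • 𝐞 1 + p 4 • 𝐞 2), -𝐞 4, -(𝐞 1 + p 6 • 𝐞 2), -𝐞 2] := by
  rw [adaptedFrame, lieBracket_Z1'_lieBracket_Z1'_Z2',
    lieBracket_lieBracket_Z1'_Z2'_lieBracket_Z1'_Z3', lieBracket_Z1'_Z2', lieBracket_Z1'_Z3']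
  rfl

theorem linearIndependent_adaptedFrame (p : Fin 7 → ℝ) : LinearIndependent ℝ (adaptedFrame p) := by
  rw [adaptedFrame_eq, Fintype.linearIndependent_iff]
  intro g hg
  simp [funext_iff, Fin.forall_fin_succ, Fin.sum_univ_seven, Z1', Pi.single_apply] at hg
  obtain ⟨h0, h1, h2, h3, h4, h5, h6⟩ := hg
  intro i
  fin_cases i <;> simp_all

theorem finrank_span_adaptedFrame_comp_castLE (p : Fin 7 → ℝ) {m : ℕ} (h : m ≤ 7) :
    Module.finrank ℝ (Submodule.span ℝ (Set.range (adaptedFrame p ∘ Fin.castLE h))) = m := by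
  rw [finrank_span_eq_card ((linearIndependent_adaptedFrame p).comp _ (Fin.castLE_injective h)),
    Fintype.card_fin]

theorem range_adaptedFrame_subset (p : Fin 7 → ℝ) :
    Set.range (adaptedFrame p) ⊆ (Set.range fun i : Fin 6 => sixFields' i p) ∪
      {x | ∃ i j : Fin 6, i < j ∧ x = lieBracket (sixFields' i) (sixFields' j) p} := by
  rintro _ ⟨i, rfl⟩
  fin_cases i
  · exact .inl ⟨0, rfl⟩
  · exact .inl ⟨1, rfl⟩
  · exact .inl ⟨2, rfl⟩
  · exact .inl ⟨3, rfl⟩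
  · exact .inl ⟨4, rfl⟩
  · exact .inr ⟨0, 3, by decide, rfl⟩
  · exact .inr ⟨3, 4, by decide, rfl⟩

/-- The tower of Lie squares of `(Z₁', Z₂', Z₃')` has ranks `3, 5, 7` at every
point of `ℝ^7`. -/
theorem singular_model_flag_ranks (p : Fin 7 → ℝ) :
    Module.finrank ℝ (Submodule.span ℝ {Z1' p, Z2' p, Z3' p}) = 3 ∧
    Module.finrank ℝ (Submodule.span ℝ
      ({Z1' p, Z2' p, Z3' p} ∪
        {lieBracket Z1' Z2' p, lieBracket Z1' Z3' p, lieBracket Z2' Z3' p})) = 5 ∧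
    Submodule.span ℝ
      ((Set.range fun i : Fin 6 => sixFields' i p) ∪
        {x : Fin 7 → ℝ | ∃ i j : Fin 6, i < j ∧
          x = lieBracket (sixFields' i) (sixFields' j) p}) = ⊤ := by
  have hD : ({Z1' p, Z2' p, Z3' p} : Set (Fin 7 → ℝ)) =
      Set.range (adaptedFrame p ∘ Fin.castLE (by norm_num : 3 ≤ 7)) := by
    ext x
    simp [Fin.exists_fin_succ, adaptedFrame, eq_comm]
  have hD2 : ({Z1' p, Z2' p, Z3' p} ∪
        {lieBracket Z1' Z2' p, lieBracket Z1' Z3' p, lieBracket Z2' Z3' p} : Set (Fin 7 → ℝ)) =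
      insert 0 (Set.range (adaptedFrame p ∘ Fin.castLE (by norm_num : 5 ≤ 7))) := by
    ext x
    simp [lieBracket_Z2'_Z3', Fin.exists_fin_succ, adaptedFrame, eq_comm]
    tauto
  refine ⟨?_, ?_, ?_⟩
  · rw [hD, finrank_span_adaptedFrame_comp_castLE]
  · rw [hD2, Submodule.span_insert_zero, finrank_span_adaptedFrame_comp_castLE]
  · exact eq_top_iff.2 <| ((linearIndependent_adaptedFrame p).span_eq_top_of_card_eq_finrank'
      (by simp)).ge.trans (Submodule.span_mono (range_adaptedFrame_subset p))
end

section
/- On ℝ^{11} with coordinates (t, x_0, y_0, x_1, y_1, x_2, y_2, x_3, y_3, x_4, y_4), fix real parameters b_3, c_3, c_4 and define the vector fields W_1 = x_4·( x_2·(∂_t + x_1∂_{x_0} + y_1∂_{y_0}) + ∂_{x_1} + y_2∂_{y_1} + (b_3 + x_3)∂_{x_2} + (c_3 + y_3)∂_{y_2} ) + ∂_{x_3} + (c_4 + y_4)∂_{y_3}, W_2 = ∂_{x_4}, W_3 = ∂_{y_4}. Let V_1 ⊆ V_2 ⊆ … be the small flag of (W_1, W_2, W_3). Then the vector field ∂_t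 + x_1∂_{x_0} + y_1∂_{y_0} + (c_4 + y_4)∂_{y_1} belongs to V_5; consequently, since its value at 0 is e_t + c_4 e_{y_1}, the set of values at 0 of elements of V_5 is not contained in the span of the coordinate vectors e_{x_1}, e_{y_1}, e_{x_2}, e_{y_2}, e_{x_3}, e_{y_3}, e_{x_4}, e_{y_4}. -/
/-- Membership in the small flag `V₁ ⊆ V₂ ⊆ …` of a triple of vector fields
`(W₁, W₂, W₃)` on `ℝ^{11}`: `V₁` is the `C^∞(ℝ^{11})`-module generated by
`W₁, W₂, W₃`, and `V_{i+1}` is the `C^∞(ℝ^{11})`-module generated by `V_i`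
together with all brackets `[u, v]`, `u ∈ V₁`, `v ∈ V_i`. -/
inductive SmallFlagMem (W1 W2 W3 : (Fin 11 → ℝ) → Fin 11 → ℝ) :
    ℕ → ((Fin 11 → ℝ) → Fin 11 → ℝ) → Prop
  | gen1 : SmallFlagMem W1 W2 W3 1 W1
  | gen2 : SmallFlagMem W1 W2 W3 1 W2
  | gen3 : SmallFlagMem W1 W2 W3 1 W3
  | zero (i : ℕ) : SmallFlagMem W1 W2 W3 i 0
  | add {i : ℕ} {v w : (Fin 11 → ℝ) → Fin 11 → ℝ} :
      SmallFlagMem W1 W2 W3 i v → SmallFlagMem W1 W2 W3 i w →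
      SmallFlagMem W1 W2 W3 i (v + w)
  | smul {i : ℕ} {v : (Fin 11 → ℝ) → Fin 11 → ℝ} (f : (Fin 11 → ℝ) → ℝ) :
      ContDiff ℝ (⊤ : ℕ∞) f → SmallFlagMem W1 W2 W3 i v →
      SmallFlagMem W1 W2 W3 i (fun p => f p • v p)
  | mono {i : ℕ} {v : (Fin 11 → ℝ) → Fin 11 → ℝ} :
      SmallFlagMem W1 W2 W3 i v → SmallFlagMem W1 W2 W3 (i + 1) v
  | bracket {i : ℕ} {u v : (Fin 11 → ℝ) → Fin 11 → ℝ} :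
      SmallFlagMem W1 W2 W3 1 u → SmallFlagMem W1 W2 W3 i v →
      SmallFlagMem W1 W2 W3 (i + 1) (lieBracket u v)

/-- Coordinates on `ℝ^{11}`: `(t, x₀, y₀, x₁, y₁, x₂, y₂, x₃, y₃, x₄, y₄)` =
indices `0, …, 10`.  The EKR generator of type 1.2.1.2:
`W₁ = x₄( x₂(∂_t + x₁∂_{x₀} + y₁∂_{y₀}) + ∂_{x₁} + y₂∂_{y₁} + (b₃+x₃)∂_{x₂}
+ (c₃+y₃)∂_{y₂} ) + ∂_{x₃} + (c₄+y₄)∂_{y₃}`. -/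
def W1ekr (b3 c3 c4 : ℝ) : (Fin 11 → ℝ) → Fin 11 → ℝ := fun p =>
  p 9 • (p 5 • (Pi.single 0 (1 : ℝ) + p 3 • (Pi.single 1 (1 : ℝ) : Fin 11 → ℝ)
        + p 4 • (Pi.single 2 (1 : ℝ) : Fin 11 → ℝ))
      + Pi.single 3 1
      + p 6 • (Pi.single 4 (1 : ℝ) : Fin 11 → ℝ)
      + (b3 + p 7) • (Pi.single 5 (1 : ℝ) : Fin 11 → ℝ)
      + (c3 + p 8) • (Pi.single 6 (1 : ℝ) : Fin 11 → ℝ))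
    + Pi.single 7 1
    + (c4 + p 10) • (Pi.single 8 (1 : ℝ) : Fin 11 → ℝ)

/-- `W₂ = ∂_{x₄}`. -/
def W2ekr : (Fin 11 → ℝ) → Fin 11 → ℝ := fun _ => Pi.single 9 1

/-- `W₃ = ∂_{y₄}`. -/
def W3ekr : (Fin 11 → ℝ) → Fin 11 → ℝ := fun _ => Pi.single 10 1

/-! ### Auxiliary definitions and computations -/

open ContinuousLinearMap

noncomputable section

abbrev prj (i : Fin 11) : (Fin 11 → ℝ) →L[ℝ] ℝ := proj i

abbrev eV (k : Fin 11) : Fin 11 → ℝ := Pi.single k 1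

def Bf : (Fin 11 → ℝ) → Fin 11 → ℝ := fun p => eV 0 + p 3 • eV 1 + p 4 • eV 2

def Af (b3 c3 : ℝ) : (Fin 11 → ℝ) → Fin 11 → ℝ := fun p =>
  p 5 • Bf p + eV 3 + p 6 • eV 4 + (b3 + p 7) • eV 5 + (c3 + p 8) • eV 6

def Cf (c4 : ℝ) : (Fin 11 → ℝ) → Fin 11 → ℝ := fun p => eV 5 + (c4 + p 10) • eV 6

def Gf (c4 : ℝ) : (Fin 11 → ℝ) → Fin 11 → ℝ := fun p => Bf p + (c4 + p 10) • eV 4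

def Df (c4 : ℝ) : (Fin 11 → ℝ) → Fin 11 → ℝ := fun p => (-(p 9)) • Gf c4 p

def LB : (Fin 11 → ℝ) →L[ℝ] (Fin 11 → ℝ) := (prj 3).smulRight (eV 1) + (prj 4).smulRight (eV 2)

lemma hasB (p : Fin 11 → ℝ) : HasFDerivAt Bf LB p := by
  have h := ((hasFDerivAt_const (eV 0) p).add
      ((hasFDerivAt_apply (𝕜 := ℝ) (3 : Fin 11) p).smul_const (eV 1))).add
      ((hasFDerivAt_apply (𝕜 := ℝ) (4 : Fin 11) p).smul_const (eV 2))
  simpa [Bf, LB] using h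

def LA (p : Fin 11 → ℝ) : (Fin 11 → ℝ) →L[ℝ] (Fin 11 → ℝ) :=
  p 5 • LB + (prj 5).smulRight (Bf p) + (prj 6).smulRight (eV 4)
    + (prj 7).smulRight (eV 5) + (prj 8).smulRight (eV 6)

lemma hasA (b3 c3 : ℝ) (p : Fin 11 → ℝ) : HasFDerivAt (Af b3 c3) (LA p) p := by
  have h := (((((hasFDerivAt_apply (𝕜 := ℝ) (5 : Fin 11) p).smul (hasB p)).add
      (hasFDerivAt_const (eV 3) p)).add
      ((hasFDerivAt_apply (𝕜 := ℝ) (6 : Fin 11) p).smul_const (eV 4))).add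
      (((hasFDerivAt_const b3 p).add (hasFDerivAt_apply (𝕜 := ℝ) (7 : Fin 11) p)).smul_const (eV 5))).add
      (((hasFDerivAt_const c3 p).add (hasFDerivAt_apply (𝕜 := ℝ) (8 : Fin 11) p)).smul_const (eV 6))
  simpa [Af, LA, add_assoc] using h

def LW1 (b3 c3 : ℝ) (p : Fin 11 → ℝ) : (Fin 11 → ℝ) →L[ℝ] (Fin 11 → ℝ) :=
  p 9 • LA p + (prj 9).smulRight (Af b3 c3 p) + (prj 10).smulRight (eV 8)

lemma hasW1 (b3 c3 c4 : ℝ) (p : Fin 11 → ℝ) :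
    HasFDerivAt (W1ekr b3 c3 c4) (LW1 b3 c3 p) p := by
  have h := (((hasFDerivAt_apply (𝕜 := ℝ) (9 : Fin 11) p).smul (hasA b3 c3 p)).add
      (hasFDerivAt_const (eV 7) p)).add
      (((hasFDerivAt_const c4 p).add (hasFDerivAt_apply (𝕜 := ℝ) (10 : Fin 11) p)).smul_const (eV 8))
  have h2 : HasFDerivAt (W1ekr b3 c3 c4) _ p := h
  simpa [LW1, add_assoc] using h2

lemma eq1 (b3 c3 c4 : ℝ) : lieBracket W2ekr (W1ekr b3 c3 c4) = Af b3 c3 := by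
  funext p
  have hW2 : HasFDerivAt W2ekr (0 : (Fin 11 → ℝ) →L[ℝ] (Fin 11 → ℝ)) p := hasFDerivAt_const _ _
  simp only [lieBracket, (hasW1 b3 c3 c4 p).fderiv, hW2.fderiv, LW1, LA, LB]
  funext i
  simp [W2ekr, Af, Bf, Pi.single_apply]

lemma eq2 (b3 c3 c4 : ℝ) : lieBracket (W1ekr b3 c3 c4) (Af b3 c3) = Cf c4 := by
  funext p
  simp only [lieBracket, (hasW1 b3 c3 c4 p).fderiv, (hasA b3 c3 p).fderiv, LW1, LA, LB]
  funext i
  simp [W1ekr, Af, Bf, Cf, Pi.single_apply]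
  fin_cases i <;> simp <;> ring_nf

def LC : (Fin 11 → ℝ) →L[ℝ] (Fin 11 → ℝ) := (prj 10).smulRight (eV 6)

lemma hasC (c4 : ℝ) (p : Fin 11 → ℝ) : HasFDerivAt (Cf c4) LC p := by
  have h := (hasFDerivAt_const (eV 5) p).add
    (((hasFDerivAt_const c4 p).add (hasFDerivAt_apply (𝕜 := ℝ) (10 : Fin 11) p)).smul_const (eV 6))
  simpa [Cf, LC] using h

def LG : (Fin 11 → ℝ) →L[ℝ] (Fin 11 → ℝ) := LB + (prj 10).smulRight (eV 4)

lemma hasG (c4 : ℝ) (p : Fin 11 → ℝ) : HasFDerivAt (Gf c4) LG p := by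
  have h := (hasB p).add
    (((hasFDerivAt_const c4 p).add (hasFDerivAt_apply (𝕜 := ℝ) (10 : Fin 11) p)).smul_const (eV 4))
  simpa [Gf, LG] using h

def LD (c4 : ℝ) (p : Fin 11 → ℝ) : (Fin 11 → ℝ) →L[ℝ] (Fin 11 → ℝ) :=
  (-(p 9)) • LG + (-(prj 9)).smulRight (Gf c4 p)

lemma hasD (c4 : ℝ) (p : Fin 11 → ℝ) : HasFDerivAt (Df c4) (LD c4 p) p := by
  have h := ((hasFDerivAt_apply (𝕜 := ℝ) (9 : Fin 11) p).neg).smul (hasG c4 p)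
  simpa [Df, LD] using h

lemma eq3 (b3 c3 c4 : ℝ) : lieBracket (W1ekr b3 c3 c4) (Cf c4) = Df c4 := by
  funext p
  simp only [lieBracket, (hasW1 b3 c3 c4 p).fderiv, (hasC c4 p).fderiv, LW1, LA, LB, LC]
  funext i
  simp [W1ekr, Af, Bf, Cf, Df, Gf, Pi.single_apply]
  fin_cases i <;> simp <;> ring_nf

lemma eq4 (c4 : ℝ) : lieBracket W2ekr (Df c4) = fun p => (-1 : ℝ) • Gf c4 p := by
  funext p
  have hW2 : HasFDerivAt W2ekr (0 : (Fin 11 → ℝ) →L[ℝ] (Fin 11 → ℝ)) p := hasFDerivAt_const _ _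
  simp only [lieBracket, (hasD c4 p).fderiv, hW2.fderiv, LD, LG, LB]
  funext i
  simp [W2ekr, Gf, Bf, Pi.single_apply]
  fin_cases i <;> simp <;> ring_nf

lemma memG (b3 c3 c4 : ℝ) :
    SmallFlagMem (W1ekr b3 c3 c4) W2ekr W3ekr 5 (Gf c4) := by
  have hA : SmallFlagMem (W1ekr b3 c3 c4) W2ekr W3ekr 2 (Af b3 c3) :=
    eq1 b3 c3 c4 ▸ SmallFlagMem.bracket .gen2 .gen1
  have hC : SmallFlagMem (W1ekr b3 c3 c4) W2ekr W3ekr 3 (Cf c4) :=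
    eq2 b3 c3 c4 ▸ SmallFlagMem.bracket .gen1 hA
  have hD : SmallFlagMem (W1ekr b3 c3 c4) W2ekr W3ekr 4 (Df c4) :=
    eq3 b3 c3 c4 ▸ SmallFlagMem.bracket .gen1 hC
  have hB : SmallFlagMem (W1ekr b3 c3 c4) W2ekr W3ekr 5 (lieBracket W2ekr (Df c4)) :=
    SmallFlagMem.bracket .gen2 hD
  have h5 : SmallFlagMem (W1ekr b3 c3 c4) W2ekr W3ekr 5
      (fun p => (-1 : ℝ) • (lieBracket W2ekr (Df c4)) p) :=
    SmallFlagMem.smul _ contDiff_const hB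
  have heq : (fun p => (-1 : ℝ) • (lieBracket W2ekr (Df c4)) p) = Gf c4 := by
    rw [eq4]; funext p; simp
  exact heq ▸ h5

end

/-- For the EKR pseudo-normal form of type 1.2.1.2, the vector field
`∂_t + x₁∂_{x₀} + y₁∂_{y₀} + (c₄+y₄)∂_{y₁}` belongs to the fifth member `V₅` of
the small flag; since its value at `0` is `e_t + c₄ e_{y₁}`, the values at `0`
of elements of `V₅` are not all contained in
`span(e_{x₁}, e_{y₁}, e_{x₂}, e_{y₂}, e_{x₃}, e_{y₃}, e_{x₄}, e_{y₄})`. -/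
theorem ekr_1212_class (b3 c3 c4 : ℝ) :
    SmallFlagMem (W1ekr b3 c3 c4) W2ekr W3ekr 5
      (fun p => Pi.single 0 (1 : ℝ) + p 3 • (Pi.single 1 (1 : ℝ) : Fin 11 → ℝ)
        + p 4 • (Pi.single 2 (1 : ℝ) : Fin 11 → ℝ)
        + (c4 + p 10) • (Pi.single 4 (1 : ℝ) : Fin 11 → ℝ)) ∧
    ¬ (∀ v : (Fin 11 → ℝ) → Fin 11 → ℝ,
        SmallFlagMem (W1ekr b3 c3 c4) W2ekr W3ekr 5 v →
        v 0 ∈ Submodule.span ℝ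
          (Set.range fun i : Fin 8 =>
            (Pi.single (⟨(i : ℕ) + 3, by have := i.isLt; omega⟩ : Fin 11) (1 : ℝ) :
              Fin 11 → ℝ))) := by
  have hmem : SmallFlagMem (W1ekr b3 c3 c4) W2ekr W3ekr 5
      (fun p => Pi.single 0 (1 : ℝ) + p 3 • (Pi.single 1 (1 : ℝ) : Fin 11 → ℝ)
        + p 4 • (Pi.single 2 (1 : ℝ) : Fin 11 → ℝ)
        + (c4 + p 10) • (Pi.single 4 (1 : ℝ) : Fin 11 → ℝ)) := memG b3 c3 c4
  refine ⟨hmem, fun hall => ?_⟩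
  have h0 := hall _ hmem
  have hle : Submodule.span ℝ
      (Set.range fun i : Fin 8 =>
        (Pi.single (⟨(i : ℕ) + 3, by have := i.isLt; omega⟩ : Fin 11) (1 : ℝ) : Fin 11 → ℝ)) ≤
      LinearMap.ker (LinearMap.proj (0 : Fin 11) : (Fin 11 → ℝ) →ₗ[ℝ] ℝ) := by
    rw [Submodule.span_le]
    rintro _ ⟨i, rfl⟩
    simp only [SetLike.mem_coe, LinearMap.mem_ker, LinearMap.proj_apply]
    rw [Pi.single_apply, if_neg]
    intro h
    have := congrArg Fin.val h
    simp at this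
  have hker := hle h0
  simp [LinearMap.mem_ker, Pi.single_apply] at hker
end
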